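/- The number of cyclic binary sequences of length 2n with exactly n+1 ones and n-1 zeros that contain exactly b cyclically-consecutive pairs of zeros (i.e., b positions k with both entries at k and k+1 mod 2n equal to zero) is (2n/(n+1)) * C(n+1, n-b-1) * C(n-2, b). -/

import Mathlib

/-!
Rotating a cyclic word so that a chosen one moves to position `0` is a bijection, so double
counting the pairs (word, position of a one) gives
`#words · (n + 1) = 2n · #(words with first letter 1)`.
For a word starting with `1` the wrap-around pair is not a pair of zeros, so cyclic and linear
pairs of zeros agree. Linear words with prescribed first letter are counted by prepending a
letter: with `o` ones and `z + 1` zeros, the zeros form `z + 1 - b` runs, whose lengths are a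
composition counted by `C(z, b)` and which follow distinct ones, giving `C(z, b) · C(o, z + 1 - b)`
when the word starts with `1`.
-/

open Finset

def nextPos {n : ℕ} (k : Fin (2 * n)) : Fin (2 * n) :=
  ⟨(k.val + 1) % (2 * n), Nat.mod_lt _ (Nat.lt_of_le_of_lt (Nat.zero_le _) k.isLt)⟩

theorem card_filter_add_left {M : ℕ} [NeZero M] (c : Fin M) (p : Fin M → Prop)
    [DecidablePred p] : #{i | p (c + i)} = #{i | p i} :=
  card_equiv (Equiv.addLeft c) fun i => by simp

theorem card_filter_mul_eq_of_rotate_invariant {α : Type*} [Fintype α] [DecidableEq α]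
    {M : ℕ} [NeZero M] (P : (Fin M → α) → Prop) [DecidablePred P]
    (hP : ∀ s c, P (fun i => s (c + i)) ↔ P s) (a : α) {o : ℕ}
    (ho : ∀ s, P s → #{i | s i = a} = o) :
    #{s | P s} * o = M * #{s | P s ∧ s 0 = a} := by
  have key := card_mul_eq_card_mul (s := ({s | P s} : Finset (Fin M → α)))
    (t := (univ : Finset (Fin M))) (r := fun s i => s i = a) (m := o)
    (n := #{s | P s ∧ s 0 = a}) ?_ ?_
  · simpa using key
  · intro s hs
    exact ho s (mem_filter.1 hs).2
  · intro c _
    rw [bipartiteBelow, filter_filter]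
    refine card_nbij' (fun s i => s (c + i)) (fun s i => s (-c + i)) ?_ ?_ ?_ ?_ <;>
      intro s <;> simp [hP, ← add_assoc]

theorem card_filter_apply_zero_eq_card_filter_cons {α : Type*} [Fintype α] [DecidableEq α]
    {m : ℕ} (x : α) (Q : (Fin (m + 1) → α) → Prop) [DecidablePred Q] :
    #{u | u 0 = x ∧ Q u} = #{v : Fin m → α | Q (Fin.cons x v)} := by
  refine card_nbij' Fin.tail (fun v : Fin m → α => (Fin.cons x v : Fin (m + 1) → α))
    ?_ ?_ ?_ ?_ <;>
    simp only [coe_filter, mem_univ, true_and, Set.MapsTo, Set.LeftInvOn, Set.mem_ofPred_eq]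
  · rintro u ⟨rfl, hu⟩
    simpa using hu
  · intro v hv
    simpa using hv
  · rintro u ⟨rfl, -⟩
    exact Fin.cons_self_tail u
  · intro v _
    exact Fin.tail_cons (α := fun _ => α) x v

theorem card_filter_split_apply_zero {m : ℕ} (Q : (Fin (m + 1) → Fin 2) → Prop)
    [DecidablePred Q] :
    #{v | Q v} = #{v | v 0 = 0 ∧ Q v} +
      #({v | v 0 = 1 ∧ Q v} : Finset (Fin (m + 1) → Fin 2)) := by
  have h : ∀ x : Fin 2, ¬x = 0 ↔ x = 1 := by decide
  rw [← card_filter_add_card_filter_not (p := fun v => v 0 = 0), filter_filter, filter_filter]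
  simp only [h, and_comm]

def zeroCount {M : ℕ} (u : Fin M → Fin 2) : ℕ := #{i | u i = 0}

def zeroPairCount {m : ℕ} (u : Fin (m + 1) → Fin 2) : ℕ :=
  #{i : Fin m | u i.castSucc = 0 ∧ u i.succ = 0}

def cyclicZeroPairCount {M : ℕ} [NeZero M] (u : Fin M → Fin 2) : ℕ :=
  #{i | u i = 0 ∧ u (i + 1) = 0}

theorem card_filter_eq_one_add_zeroCount {M : ℕ} (u : Fin M → Fin 2) :
    #{i | u i = 1} + zeroCount u = M := by
  have h : ∀ x : Fin 2, ¬x = 1 ↔ x = 0 := by decide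
  rw [zeroCount, ← filter_congr fun i _ => h (u i), card_filter_add_card_filter_not, card_univ,
    Fintype.card_fin]

theorem zeroCount_cons {m : ℕ} (x : Fin 2) (v : Fin m → Fin 2) :
    zeroCount (Fin.cons x v : Fin (m + 1) → Fin 2) = zeroCount v + if x = 0 then 1 else 0 := by
  simp only [zeroCount, card_filter, Fin.sum_univ_succ, Fin.cons_zero, Fin.cons_succ]
  ring

theorem zeroPairCount_cons {m : ℕ} (x : Fin 2) (v : Fin (m + 1) → Fin 2) :
    zeroPairCount (Fin.cons x v : Fin (m + 2) → Fin 2)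
      = zeroPairCount v + if x = 0 ∧ v 0 = 0 then 1 else 0 := by
  simp only [zeroPairCount, card_filter, Fin.sum_univ_succ, Fin.castSucc_zero,
    Fin.cons_zero, ← Fin.succ_castSucc, Fin.cons_succ]
  ring

theorem cyclicZeroPairCount_eq {m : ℕ} (u : Fin (m + 1) → Fin 2) :
    cyclicZeroPairCount u = zeroPairCount u + if u (Fin.last m) = 0 ∧ u 0 = 0 then 1 else 0 := by
  simp only [cyclicZeroPairCount, zeroPairCount, card_filter, Fin.sum_univ_castSucc,
    Fin.coeSucc_eq_succ, Fin.last_add_one]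

theorem cyclicZeroPairCount_rotate {M : ℕ} [NeZero M] (s : Fin M → Fin 2) (c : Fin M) :
    cyclicZeroPairCount (fun i => s (c + i)) = cyclicZeroPairCount s := by
  simp only [cyclicZeroPairCount, ← add_assoc]
  exact card_filter_add_left c fun i => s i = 0 ∧ s (i + 1) = 0

def wordCount (m : ℕ) (x : Fin 2) (z b : ℕ) : ℕ :=
  #{u : Fin (m + 1) → Fin 2 | u 0 = x ∧ zeroCount u = z ∧ zeroPairCount u = b}

theorem wordCount_succ_one (m z b : ℕ) :
    wordCount (m + 1) 1 z b = wordCount m 0 z b + wordCount m 1 z b := by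
  rw [wordCount, card_filter_apply_zero_eq_card_filter_cons, card_filter_split_apply_zero]
  simp [zeroCount_cons, zeroPairCount_cons, wordCount]

theorem wordCount_succ_zero_succ (m z b : ℕ) :
    wordCount (m + 1) 0 (z + 1) (b + 1) = wordCount m 0 z b + wordCount m 1 z (b + 1) := by
  rw [wordCount, card_filter_apply_zero_eq_card_filter_cons, card_filter_split_apply_zero]
  simp only [zeroCount_cons, zeroPairCount_cons, wordCount]
  congr 1 <;> refine congrArg card (filter_congr fun v _ => and_congr_right fun h => ?_) <;>
    simp [h]

theorem wordCount_succ_zero_zero (m z : ℕ) :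
    wordCount (m + 1) 0 (z + 1) 0 = wordCount m 1 z 0 := by
  rw [wordCount, card_filter_apply_zero_eq_card_filter_cons, card_filter_split_apply_zero]
  simp only [zeroCount_cons, zeroPairCount_cons, wordCount]
  rw [filter_false_of_mem fun v _ => ?_, card_empty, zero_add]
  · refine congrArg card (filter_congr fun v _ => and_congr_right fun h => ?_)
    simp [h]
  · rintro ⟨h, -, hb⟩
    simp [h] at hb

theorem wordCount_eq_zero_of_lt {m z : ℕ} (x : Fin 2) (b : ℕ) (h : m + 1 < z) :
    wordCount m x z b = 0 := by
  refine card_eq_zero.2 (filter_false_of_mem fun u _ ⟨_, hz, _⟩ => ?_)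
  have : zeroCount u ≤ m + 1 := (card_filter_le _ _).trans_eq (card_fin _)
  omega

theorem wordCount_zero_zero (m b : ℕ) : wordCount m 0 0 b = 0 := by
  refine card_eq_zero.2 (filter_false_of_mem fun u _ ⟨h0, hz, _⟩ => ?_)
  have : 0 < zeroCount u := card_pos.2 ⟨0, by simp [h0]⟩
  omega

theorem wordCount_one_zero (m b : ℕ) : wordCount m 1 0 b = if b = 0 then 1 else 0 := by
  have h : ∀ u : Fin (m + 1) → Fin 2, u 0 = 1 ∧ zeroCount u = 0 ∧ zeroPairCount u = b ↔
      u = (fun _ => 1) ∧ b = 0 := by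
    have h1 : ∀ x : Fin 2, ¬x = 0 ↔ x = 1 := by decide
    intro u
    constructor
    · rintro ⟨-, hz, rfl⟩
      obtain rfl : u = fun _ => 1 :=
        funext fun i => (h1 _).1 (filter_eq_empty_iff.1 (card_eq_zero.1 hz) (mem_univ i))
      simp [zeroPairCount]
    · rintro ⟨rfl, rfl⟩
      simp [zeroCount, zeroPairCount]
  rw [wordCount, filter_congr fun u _ => h u]
  split_ifs with hb <;> simp [hb, filter_eq']

theorem wordCount_eq_choose {m o z : ℕ} (b : ℕ) (h : o + z = m) :
    wordCount m 0 (z + 1) b = z.choose b * o.choose (z - b) ∧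
      wordCount m 1 (z + 1) b = z.choose b * o.choose (z + 1 - b) := by
  induction m generalizing o z b with
  | zero =>
    obtain ⟨rfl, rfl⟩ : o = 0 ∧ z = 0 := by omega
    rcases b with _ | b
    · decide
    · have hpair : ∀ x, wordCount 0 x 1 (b + 1) = 0 := fun x =>
        card_eq_zero.2 (filter_false_of_mem fun u _ ⟨_, _, hb⟩ => by simp [zeroPairCount] at hb)
      simp [hpair]
  | succ m ih =>
    constructor
    · rcases z with _ | z
      · rcases b with _ | b
        · simp [wordCount_succ_zero_zero, wordCount_one_zero]
        · simp [wordCount_succ_zero_succ, wordCount_zero_zero, wordCount_one_zero]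
      · have ih := fun b => ih b (show o + z = m by omega)
        rcases b with _ | b
        · simp [wordCount_succ_zero_zero, (ih 0).2]
        · rw [wordCount_succ_zero_succ, (ih b).1, (ih (b + 1)).2, Nat.add_sub_add_right,
            Nat.choose_succ_succ']
          ring
    · rw [wordCount_succ_one]
      rcases o with _ | o
      · rw [wordCount_eq_zero_of_lt _ _ (by omega), wordCount_eq_zero_of_lt _ _ (by omega),
          add_zero]
        rcases le_or_gt b z with hb | hb
        · rw [Nat.choose_eq_zero_of_lt (n := 0) (by omega), mul_zero]
        · rw [Nat.choose_eq_zero_of_lt hb, zero_mul]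
      · obtain ⟨ih₀, ih₁⟩ := ih b (show o + z = m by omega)
        rw [ih₀, ih₁]
        rcases le_or_gt b z with hb | hb
        · rw [show z + 1 - b = z - b + 1 by omega, Nat.choose_succ_succ']
          ring
        · simp [Nat.choose_eq_zero_of_lt hb]

theorem card_cyclicWords_mul_eq {M : ℕ} [NeZero M] (o z b : ℕ) (hM : o + z + 1 = M) :
    #{s : Fin M → Fin 2 | #{i | s i = 1} = o ∧ cyclicZeroPairCount s = b} * o
      = M * (z.choose b * o.choose (z + 1 - b)) := by
  subst hM
  have hrot : ∀ (s : Fin (o + z + 1) → Fin 2) c,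
      (#{i | s (c + i) = 1} = o ∧ cyclicZeroPairCount (fun i => s (c + i)) = b) ↔
        (#{i | s i = 1} = o ∧ cyclicZeroPairCount s = b) := fun s c => by
    rw [card_filter_add_left c (s · = 1), cyclicZeroPairCount_rotate]
  rw [card_filter_mul_eq_of_rotate_invariant _ hrot 1 fun s hs => hs.1,
    ← (wordCount_eq_choose b rfl).2, wordCount]
  congr 2
  refine filter_congr fun s _ => ?_
  have hcount := card_filter_eq_one_add_zeroCount s
  rw [cyclicZeroPairCount_eq, and_comm, and_congr_right_iff]
  intro h0
  simp only [h0, one_ne_zero, and_false, if_false, add_zero]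
  omega

theorem nextPos_eq_add_one {n : ℕ} [NeZero (2 * n)] (k : Fin (2 * n)) : nextPos k = k + 1 :=
  Fin.ext (by simp [nextPos, Fin.val_add])

theorem stmt_13_general (n b : ℕ) (hn : 2 ≤ n) :
    ((((Finset.univ : Finset (Fin (2 * n) → Fin 2))).filter
        (fun s => (Finset.univ.filter fun i => s i = 1).card = n + 1 ∧
          (Finset.univ.filter fun k => s k = 0 ∧ s (nextPos k) = 0).card = b)).card : ℚ)
      = (2 * n / ((n : ℚ) + 1)) * (Nat.choose (n + 1) (n - b - 1)) * (Nat.choose (n - 2) b) := by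
  have : NeZero (2 * n) := ⟨by omega⟩
  have key := card_cyclicWords_mul_eq (M := 2 * n) (n + 1) (n - 2) b (by omega)
  rw [show n - 2 + 1 - b = n - b - 1 by omega] at key
  unfold cyclicZeroPairCount at key
  simp only [nextPos_eq_add_one]
  field_simp
  exact_mod_cast key.trans (by ring)

/-- The number of cyclic binary sequences of length `2n` with exactly `n+1`
ones and `n-1` zeros containing exactly `b` cyclically-consecutive pairs of zeros is
`(2n/(n+1)) · C(n+1, n-b-1) · C(n-2, b)`. -/
theorem stmt_13 (n b : ℕ) (hn : 2 ≤ n) (hb : b ≤ n - 2) :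
    ((((Finset.univ : Finset (Fin (2 * n) → Fin 2))).filter
        (fun s => (Finset.univ.filter fun i => s i = 1).card = n + 1 ∧
          (Finset.univ.filter fun k => s k = 0 ∧ s (nextPos k) = 0).card = b)).card : ℚ)
      = (2 * n / ((n : ℚ) + 1)) * (Nat.choose (n + 1) (n - b - 1)) * (Nat.choose (n - 2) b) :=
  stmt_13_general n b hn
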